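/- Theorem 6: under the covariance assumptions for the minimax problem, if a minimax solution exists and 𝓜ᵐᵐ is nonempty, then there exists a minimax solution (μ, Π) that is G-covariant: μ k = μ (g • k) for all g ∈ G and k ∈ Fin K, and (U g) * Π m * (U g)† = Π (g • m) for all g ∈ G and m ∈ Fin M. -/

import Mathlib

open Matrix Complex
open scoped ComplexOrder

noncomputable section

/-- A POVM with `M` outcomes: each detection operator is positive semidefinite
and they sum to the identity. -/
def IsPOVM {n : Type*} [Fintype n] [DecidableEq n] {M : ℕ}
    (P : Fin M → Matrix n n ℂ) : Prop :=
  (∀ m, (P m).PosSemidef) ∧ ∑ m, P m = 1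

/-- Membership in the feasible set `𝓜ᵐᵐ`. -/
def Feasible {n : Type*} [Fintype n] [DecidableEq n] {M J : ℕ}
    (a : Fin J → Fin M → Matrix n n ℂ) (b : Fin J → ℝ)
    (P : Fin M → Matrix n n ℂ) : Prop :=
  IsPOVM P ∧ ∀ j, ∑ m, ((a j m * P m).trace).re ≤ b j

/-- The primal objective `f(Π)`. -/
def primalObj {n : Type*} [Fintype n] {M : ℕ}
    (c : Fin M → Matrix n n ℂ) (P : Fin M → Matrix n n ℂ) : ℝ :=
  ∑ m, ((c m * P m).trace).re

/-- The operator `z m λ = c m - ∑ j, λ j • a j m`. -/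
def zOp {M J : ℕ} {n : Type*}
    (c : Fin M → Matrix n n ℂ) (a : Fin J → Fin M → Matrix n n ℂ)
    (lam : Fin J → ℝ) (m : Fin M) : Matrix n n ℂ :=
  c m - ∑ j, (lam j : ℂ) • a j m

/-- The dual objective `s(X, λ)`. -/
def dualObj {n : Type*} [Fintype n] {J : ℕ}
    (b : Fin J → ℝ) (X : Matrix n n ℂ) (lam : Fin J → ℝ) : ℝ :=
  X.trace.re + ∑ j, lam j * b j


/-- The probability simplex `P` over `Fin K`. -/
def Simplex {K : ℕ} (μ : Fin K → ℝ) : Prop :=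
  (∀ k, 0 ≤ μ k) ∧ ∑ k, μ k = 1

/-- The functions `f k (Π) = ∑ m, Re(Tr(c k m * Π m)) + d k`. -/
def fObj {n : Type*} [Fintype n] {M K : ℕ}
    (c : Fin K → Fin M → Matrix n n ℂ) (d : Fin K → ℝ)
    (k : Fin K) (P : Fin M → Matrix n n ℂ) : ℝ :=
  ∑ m, ((c k m * P m).trace).re + d k

/-- The payoff function `F(μ, Π) = ∑ k, μ k * f k (Π)`. -/
def FObj {n : Type*} [Fintype n] {M K : ℕ}
    (c : Fin K → Fin M → Matrix n n ℂ) (d : Fin K → ℝ)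
    (μ : Fin K → ℝ) (P : Fin M → Matrix n n ℂ) : ℝ :=
  ∑ k, μ k * fObj c d k P

/-- `F⋆(μ)`: the supremum of `F(μ, Π)` over feasible `Π`. -/
def Fstar {n : Type*} [Fintype n] [DecidableEq n] {M J K : ℕ}
    (a : Fin J → Fin M → Matrix n n ℂ) (b : Fin J → ℝ)
    (c : Fin K → Fin M → Matrix n n ℂ) (d : Fin K → ℝ)
    (μ : Fin K → ℝ) : ℝ :=
  sSup ((fun P => FObj c d μ P) '' {P | Feasible a b P})

/-- A minimax solution (saddle point of `F`). -/
def IsMinimaxSol {n : Type*} [Fintype n] [DecidableEq n] {M J K : ℕ}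
    (a : Fin J → Fin M → Matrix n n ℂ) (b : Fin J → ℝ)
    (c : Fin K → Fin M → Matrix n n ℂ) (d : Fin K → ℝ)
    (μs : Fin K → ℝ) (Ps : Fin M → Matrix n n ℂ) : Prop :=
  Simplex μs ∧ Feasible a b Ps ∧
    (∀ P, Feasible a b P → FObj c d μs P ≤ FObj c d μs Ps) ∧
    (∀ μ, Simplex μ → FObj c d μs Ps ≤ FObj c d μ Ps)

/-- The action `g · A = (U g) * A * (U g)†` of a group on matrices induced by a
unitary representation `U`. -/
def conjAct {n : Type*} [Fintype n] [DecidableEq n] {G : Type*} [Group G]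
    (U : G →* Matrix.unitaryGroup n ℂ) (g : G) (A : Matrix n n ℂ) : Matrix n n ℂ :=
  (U g : Matrix n n ℂ) * A * star (U g : Matrix n n ℂ)

/-- The mapping `κ_g` sending `Φ` to `m ↦ (U g)⁻¹ * Φ (g • m) * (U g)`
(note `(U g)⁻¹ = (U g)† = star (U g)`). -/
def kappa {n : Type*} [Fintype n] [DecidableEq n] {G : Type*} [Group G] {M : ℕ}
    [MulAction G (Fin M)]
    (U : G →* Matrix.unitaryGroup n ℂ) (g : G)
    (Φ : Fin M → Matrix n n ℂ) : Fin M → Matrix n n ℂ :=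
  fun m => star (U g : Matrix n n ℂ) * Φ (g • m) * (U g : Matrix n n ℂ)

/-!
Average a minimax solution `(μ*, Π*)` over the group: `μ̄ = |G|⁻¹ ∑_g μ* ∘ (g • ·)` and
`Π̄ = |G|⁻¹ ∑_g κ_g Π*`. The covariance assumptions make each `κ_g` preserve feasibility and make
`F` invariant under the joint action `(μ ∘ (g • ·), κ_g Π)`, so every translate of `(μ*, Π*)` is a
saddle point with the same value `v`. As `F` is affine in each argument, Jensen's inequality
bounds `F(μ̄, Π)` above by some `F(μ* ∘ (g • ·), Π) ≤ v` and `F(μ, Π̄)` below by some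
`F(μ, κ_g Π*) ≥ v`, so `(μ̄, Π̄)` is a saddle point; being orbit averages, `μ̄` and `Π̄` are
fixed by the action, i.e. covariant.
-/

open Finset

section OrbitAverage

variable {G E : Type*} [Group G] [Fintype G] [AddCommGroup E] [Module ℝ E]

lemma sum_const_one_pos : 0 < ∑ _g : G, (1 : ℝ) := by
  simp [Fintype.card_pos]

lemma map_centerMass_orbit (T : G → E →ₗ[ℝ] E) (hT : ∀ g h x, T h (T g x) = T (g * h) x)
    (x : E) (h : G) :
    T h (univ.centerMass (fun _ => (1 : ℝ)) fun g => T g x) =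
      univ.centerMass (fun _ => (1 : ℝ)) fun g => T g x := by
  simp only [centerMass, map_smul, map_sum, hT]
  congr 1
  exact Equiv.sum_comp (Equiv.mulRight h) fun g => (1 : ℝ) • T g x

end OrbitAverage

section Kappa

variable {n : Type*} [Fintype n] [DecidableEq n] {G : Type*} [Group G] {M : ℕ}
  [MulAction G (Fin M)] (U : G →* Matrix.unitaryGroup n ℂ)

lemma kappa_kappa (g h : G) (P : Fin M → Matrix n n ℂ) :
    kappa U h (kappa U g P) = kappa U (g * h) P := by
  ext1 m
  simp only [kappa, map_mul, Matrix.UnitaryGroup.mul_val, star_mul, mul_smul, mul_assoc]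

lemma kappa_one (P : Fin M → Matrix n n ℂ) : kappa U 1 P = P := by
  ext1 m
  simp [kappa]

def kappaLinearMap (g : G) : (Fin M → Matrix n n ℂ) →ₗ[ℝ] Fin M → Matrix n n ℂ where
  toFun := kappa U g
  map_add' P Q := by ext1 m; simp [kappa, mul_add, add_mul]
  map_smul' r P := by ext1 m; simp [kappa]

lemma conjAct_eq_of_kappa_eq {g : G} {P : Fin M → Matrix n n ℂ} (hP : kappa U g P = P)
    (m : Fin M) : conjAct U g (P m) = P (g • m) := by
  have hU : (U g : Matrix n n ℂ) * star (U g : Matrix n n ℂ) = 1 := Unitary.coe_mul_star_self _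
  conv_lhs => rw [← hP]
  simp only [conjAct, kappa, ← mul_assoc, hU, one_mul]
  simp only [mul_assoc, hU, mul_one]

lemma IsPOVM.kappa {P : Fin M → Matrix n n ℂ} (hP : IsPOVM P) (g : G) :
    IsPOVM (kappa U g P) := by
  refine ⟨fun m => (hP.1 (g • m)).conjTranspose_mul_mul_same _, ?_⟩
  have hsum : ∑ m, P (g • m) = 1 := (Equiv.sum_comp (MulAction.toPerm g) P).trans hP.2
  simp only [_root_.kappa, ← Finset.mul_sum, ← Finset.sum_mul, hsum, mul_one]
  exact Unitary.coe_star_mul_self _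

omit [DecidableEq n] in
lemma trace_mul_star_mul_mul (V A B : Matrix n n ℂ) :
    (A * (star V * B * V)).trace = (V * A * star V * B).trace := by
  rw [← Matrix.mul_assoc, ← Matrix.mul_assoc, Matrix.trace_mul_comm]
  simp only [Matrix.mul_assoc]

lemma primalObj_kappa {g : G} {c c' : Fin M → Matrix n n ℂ}
    (hc : ∀ m, conjAct U g (c m) = c' (g • m)) (P : Fin M → Matrix n n ℂ) :
    primalObj c (kappa U g P) = primalObj c' P := by
  have hc' : ∀ m, (U g : Matrix n n ℂ) * c m * star (U g : Matrix n n ℂ) = c' (g • m) := hc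
  simp only [primalObj, kappa, trace_mul_star_mul_mul, hc']
  exact Equiv.sum_comp (MulAction.toPerm g) fun m => ((c' m * P m).trace).re

end Kappa

lemma primalObj_add_smul {n : Type*} [Fintype n] {M : ℕ} (c P Q : Fin M → Matrix n n ℂ)
    (r s : ℝ) : primalObj c (r • P + s • Q) = r * primalObj c P + s * primalObj c Q := by
  simp [primalObj, Matrix.mul_add, Matrix.trace_add, sum_add_distrib, mul_sum]

lemma Simplex.comp_smul {G : Type*} [Group G] {K : ℕ} [MulAction G (Fin K)] {μ : Fin K → ℝ}
    (hμ : Simplex μ) (g : G) : Simplex fun k => μ (g • k) :=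
  ⟨fun _ => hμ.1 _, (Equiv.sum_comp (MulAction.toPerm g) μ).trans hμ.2⟩

section Minimax

variable {n : Type*} [Fintype n] [DecidableEq n] {M J K : ℕ}
  (a : Fin J → Fin M → Matrix n n ℂ) (b : Fin J → ℝ)
  (c : Fin K → Fin M → Matrix n n ℂ) (d : Fin K → ℝ)

lemma convex_setOf_isPOVM : Convex ℝ {P : Fin M → Matrix n n ℂ | IsPOVM P} := by
  rintro P ⟨hP, hP1⟩ Q ⟨hQ, hQ1⟩ r s hr hs hrs
  refine ⟨fun m => ((hP m).smul hr).add ((hQ m).smul hs), ?_⟩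
  simp only [Pi.add_apply, Pi.smul_apply, sum_add_distrib, ← smul_sum, hP1, hQ1, ← add_smul, hrs,
    one_smul]

lemma convex_setOf_feasible : Convex ℝ {P | Feasible a b P} := by
  rintro P ⟨hP, hPa⟩ Q ⟨hQ, hQa⟩ r s hr hs hrs
  refine ⟨convex_setOf_isPOVM hP hQ hr hs hrs, fun j => ?_⟩
  calc primalObj (a j) (r • P + s • Q) = r * primalObj (a j) P + s * primalObj (a j) Q :=
        primalObj_add_smul _ _ _ _ _
    _ ≤ r * b j + s * b j := by gcongr <;> [exact hPa j; exact hQa j]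
    _ = b j := by rw [← add_mul, hrs, one_mul]

omit [DecidableEq n] in
lemma convexOn_FObj_left (P : Fin M → Matrix n n ℂ) :
    ConvexOn ℝ Set.univ fun μ => FObj c d μ P := by
  refine ⟨convex_univ, fun μ _ ν _ r s _ _ _ => le_of_eq ?_⟩
  simp [FObj, add_mul, sum_add_distrib, mul_sum, mul_assoc]

omit [DecidableEq n] in
lemma concaveOn_FObj_right (μ : Fin K → ℝ) : ConcaveOn ℝ Set.univ fun P => FObj c d μ P := by
  refine ⟨convex_univ, fun P _ Q _ r s _ _ hrs => ge_of_eq ?_⟩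
  have hf : ∀ k, fObj c d k (r • P + s • Q) = r * fObj c d k P + s * fObj c d k Q := fun k => by
    change primalObj (c k) _ + d k = r * (primalObj (c k) P + d k) + s * (primalObj (c k) Q + d k)
    rw [primalObj_add_smul]
    linear_combination d k * hrs.symm
  simp only [FObj, hf, smul_eq_mul, mul_sum]
  rw [← sum_add_distrib]
  exact sum_congr rfl fun k _ => by ring

lemma isMinimaxSol_of_le_of_le {μ : Fin K → ℝ} {P : Fin M → Matrix n n ℂ} (v : ℝ)
    (hμ : Simplex μ) (hP : Feasible a b P) (hup : ∀ Q, Feasible a b Q → FObj c d μ Q ≤ v)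
    (hlo : ∀ ν, Simplex ν → v ≤ FObj c d ν P) : IsMinimaxSol a b c d μ P :=
  ⟨hμ, hP, fun Q hQ => (hup Q hQ).trans (hlo μ hμ), fun ν hν => (hup P hP).trans (hlo ν hν)⟩

variable {G : Type*} [Group G] [MulAction G (Fin M)] [MulAction G (Fin J)] [MulAction G (Fin K)]
  (U : G →* Matrix.unitaryGroup n ℂ)

lemma Feasible.kappa (hcova : ∀ (g : G) j m, conjAct U g (a j m) = a (g • j) (g • m))
    (hcovb : ∀ (g : G) j, b j = b (g • j)) {P : Fin M → Matrix n n ℂ} (hP : Feasible a b P)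
    (g : G) : Feasible a b (kappa U g P) := by
  refine ⟨hP.1.kappa U g, fun j => ?_⟩
  change primalObj (a j) _ ≤ b j
  rw [primalObj_kappa U (hcova g j), hcovb g j]
  exact hP.2 (g • j)

lemma FObj_smul_kappa (hcovc : ∀ (g : G) k m, conjAct U g (c k m) = c (g • k) (g • m))
    (hcovd : ∀ (g : G) k, d k = d (g • k)) (μ : Fin K → ℝ) (P : Fin M → Matrix n n ℂ) (g : G) :
    FObj c d (fun k => μ (g • k)) (kappa U g P) = FObj c d μ P := by
  have hf : ∀ k, fObj c d k (kappa U g P) = fObj c d (g • k) P := fun k => by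
    change primalObj (c k) _ + d k = primalObj (c (g • k)) P + d (g • k)
    rw [primalObj_kappa U (hcovc g k), hcovd g k]
  simp only [FObj, hf]
  exact Equiv.sum_comp (MulAction.toPerm g) fun k => μ k * fObj c d k P

variable [Fintype G]

lemma FObj_centerMass_le (hcova : ∀ (g : G) j m, conjAct U g (a j m) = a (g • j) (g • m))
    (hcovb : ∀ (g : G) j, b j = b (g • j))
    (hcovc : ∀ (g : G) k m, conjAct U g (c k m) = c (g • k) (g • m))
    (hcovd : ∀ (g : G) k, d k = d (g • k)) {μs : Fin K → ℝ} {Ps : Fin M → Matrix n n ℂ}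
    (hmax : ∀ P, Feasible a b P → FObj c d μs P ≤ FObj c d μs Ps) {Q : Fin M → Matrix n n ℂ}
    (hQ : Feasible a b Q) :
    FObj c d (univ.centerMass (fun _ => (1 : ℝ)) fun (g : G) k => μs (g • k)) Q ≤
      FObj c d μs Ps := by
  obtain ⟨g, -, hg⟩ := (convexOn_FObj_left c d Q).exists_ge_of_centerMass
    (fun _ _ => zero_le_one) (sum_const_one_pos (G := G)) fun _ _ => Set.mem_univ _
  calc _ ≤ FObj c d (fun k => μs (g • k)) Q := hg
    _ = FObj c d μs (kappa U g⁻¹ Q) := by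
        rw [← FObj_smul_kappa c d U hcovc hcovd μs _ g, kappa_kappa, inv_mul_cancel, kappa_one]
    _ ≤ _ := hmax _ (hQ.kappa a b U hcova hcovb g⁻¹)

lemma le_FObj_centerMass (hcovc : ∀ (g : G) k m, conjAct U g (c k m) = c (g • k) (g • m))
    (hcovd : ∀ (g : G) k, d k = d (g • k)) {μs : Fin K → ℝ} {Ps : Fin M → Matrix n n ℂ}
    (hmin : ∀ μ, Simplex μ → FObj c d μs Ps ≤ FObj c d μ Ps) {ν : Fin K → ℝ} (hν : Simplex ν) :
    FObj c d μs Ps ≤ FObj c d ν (univ.centerMass (fun _ => (1 : ℝ)) fun g => kappa U g Ps) := by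
  obtain ⟨g, -, hg⟩ := (concaveOn_FObj_right c d ν).exists_le_of_centerMass
    (fun _ _ => zero_le_one) (sum_const_one_pos (G := G)) fun _ _ => Set.mem_univ _
  calc _ ≤ FObj c d (fun k => ν (g⁻¹ • k)) Ps := hmin _ (hν.comp_smul g⁻¹)
    _ = FObj c d ν (kappa U g Ps) := by
        rw [← FObj_smul_kappa c d U hcovc hcovd _ Ps g]
        simp only [inv_smul_smul]
    _ ≤ _ := hg

end Minimax

theorem exists_covariant_minimax_solution_general
    {n : Type*} [Fintype n] [DecidableEq n]
    {G : Type*} [Group G] [Fintype G]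
    {M J K : ℕ} [MulAction G (Fin M)] [MulAction G (Fin J)] [MulAction G (Fin K)]
    (U : G →* Matrix.unitaryGroup n ℂ)
    (a : Fin J → Fin M → Matrix n n ℂ) (b : Fin J → ℝ)
    (c : Fin K → Fin M → Matrix n n ℂ) (d : Fin K → ℝ)
    (hcova : ∀ (g : G) j m, conjAct U g (a j m) = a (g • j) (g • m))
    (hcovb : ∀ (g : G) j, b j = b (g • j))
    (hcovc : ∀ (g : G) k m, conjAct U g (c k m) = c (g • k) (g • m))
    (hcovd : ∀ (g : G) k, d k = d (g • k))
    (hex : ∃ μs Ps, IsMinimaxSol a b c d μs Ps) :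
    ∃ (μ : Fin K → ℝ) (P : Fin M → Matrix n n ℂ),
      IsMinimaxSol a b c d μ P ∧
      (∀ (g : G) (k : Fin K), μ k = μ (g • k)) ∧
      (∀ (g : G) (m : Fin M), conjAct U g (P m) = P (g • m)) := by
  obtain ⟨μs, Ps, hμs, hPs, hmax, hmin⟩ := hex
  set μ := univ.centerMass (fun _ => (1 : ℝ)) fun (g : G) k => μs (g • k)
  set P := univ.centerMass (fun _ => (1 : ℝ)) fun g => kappa U g Ps
  have hμ : Simplex μ := (convex_stdSimplex ℝ (Fin K)).centerMass_mem
    (fun _ _ => zero_le_one) sum_const_one_pos fun g _ => hμs.comp_smul g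
  have hP : Feasible a b P := (convex_setOf_feasible a b).centerMass_mem
    (fun _ _ => zero_le_one) sum_const_one_pos fun g _ => hPs.kappa a b U hcova hcovb g
  refine ⟨μ, P, isMinimaxSol_of_le_of_le a b c d _ hμ hP
    (fun Q hQ => FObj_centerMass_le a b c d U hcova hcovb hcovc hcovd hmax hQ)
    (fun ν hν => le_FObj_centerMass c d U hcovc hcovd hmin hν), fun g k => ?_, fun g m => ?_⟩
  · have hshift : ∀ (g h : G) (ν : Fin K → ℝ),
        (fun k => ν (g • h • k)) = fun k => ν ((g * h) • k) :=
      fun g h ν => funext fun k => by rw [mul_smul]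
    have hfix := map_centerMass_orbit (fun g => LinearMap.funLeft ℝ ℝ (g • ·)) hshift μs g
    exact (congrFun hfix k).symm
  · exact conjAct_eq_of_kappa_eq U (map_centerMass_orbit (kappaLinearMap U) (kappa_kappa U) Ps g) m

/-- Theorem 6: under the covariance assumptions, if a minimax solution exists then
there exists a `G`-covariant minimax solution. -/
theorem exists_covariant_minimax_solution
    {n : Type*} [Fintype n] [DecidableEq n] [Nonempty n]
    {G : Type*} [Group G] [Fintype G]
    {M J K : ℕ} [MulAction G (Fin M)] [MulAction G (Fin J)] [MulAction G (Fin K)]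
    (U : G →* Matrix.unitaryGroup n ℂ)
    (a : Fin J → Fin M → Matrix n n ℂ) (b : Fin J → ℝ)
    (c : Fin K → Fin M → Matrix n n ℂ) (d : Fin K → ℝ)
    (ha : ∀ j m, (a j m).IsHermitian) (hc : ∀ k m, (c k m).IsHermitian)
    (hne : ∃ P, Feasible a b P)
    (hcova : ∀ (g : G) j m, conjAct U g (a j m) = a (g • j) (g • m))
    (hcovb : ∀ (g : G) j, b j = b (g • j))
    (hcovc : ∀ (g : G) k m, conjAct U g (c k m) = c (g • k) (g • m))
    (hcovd : ∀ (g : G) k, d k = d (g • k))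
    (hex : ∃ μs Ps, IsMinimaxSol a b c d μs Ps) :
    ∃ (μ : Fin K → ℝ) (P : Fin M → Matrix n n ℂ),
      IsMinimaxSol a b c d μ P ∧
      (∀ (g : G) (k : Fin K), μ k = μ (g • k)) ∧
      (∀ (g : G) (m : Fin M), conjAct U g (P m) = P (g • m)) :=
  exists_covariant_minimax_solution_general U a b c d hcova hcovb hcovc hcovd hex
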